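/- arXiv:1304.5089 — 2 statements merged into one kernel-verified Lean document; each statement's English description precedes it below -/
import Mathlib

section
/- Let F ⊆ ℕ² be a submonoid with extremal generators n₁, n₂ such that int(C) = int(F) and F ∩ τᵢ = {k nᵢ : k ∈ ℕ} for i = 1, 2, where C = L_{ℚ≥0}({n₁,n₂}) ∩ ℕ² and τᵢ = ℚ≥0·nᵢ. Define H = (ConvexHull({0, n₁, n₂, n₁+n₂}) \ (segment[0,n₁] ∪ segment[0,n₂] ∪ {n₁+n₂})) ∪ {0}. Then Ap(n₁) ∩ Ap(n₂) = F ∩ H, where Ap(n) = {s ∈ F : s − n ∉ F} (subtraction in ℤ²). -/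
def toQ (p : ℤ × ℤ) : ℚ × ℚ := ((p.1 : ℚ), (p.2 : ℚ))
def toR (p : ℤ × ℤ) : ℝ × ℝ := ((p.1 : ℝ), (p.2 : ℝ))
def isNat (p : ℤ × ℤ) : Prop := 0 ≤ p.1 ∧ 0 ≤ p.2
def inCone (n₁ n₂ a : ℤ × ℤ) : Prop :=
  ∃ q₁ q₂ : ℚ, 0 ≤ q₁ ∧ 0 ≤ q₂ ∧ toQ a = q₁ • toQ n₁ + q₂ • toQ n₂
def onRay (n a : ℤ × ℤ) : Prop := ∃ q : ℚ, 0 ≤ q ∧ toQ a = q • toQ n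


/-- The set `H` of the paper: `(ConvexHull{0,n₁,n₂,n₁+n₂} \ (0n₁ ∪ 0n₂ ∪ {n₁+n₂})) ∪ {0}`,
intersected with ℕ². -/
def HSet (n₁ n₂ : ℤ × ℤ) : Set (ℤ × ℤ) :=
  {a : ℤ × ℤ | isNat a ∧
    toR a ∈ convexHull ℝ {0, toR n₁, toR n₂, toR n₁ + toR n₂} ∧
    toR a ∉ segment ℝ 0 (toR n₁) ∪ segment ℝ 0 (toR n₂) ∪ {toR n₁ + toR n₂}} ∪ {0}

/-!
Since `n₁, n₂` is a rational basis, every `s ∈ F` is `q₁ n₁ + q₂ n₂` with `q₁, q₂ ≥ 0`, and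
membership in `F` can be read off these coordinates: every lattice point with both coordinates
positive lies in `F`, while on the axis `qⱼ = 0` the elements of `F` are the natural multiples of
`nᵢ`. In these coordinates `H \ {0}` is the set of lattice points in `(0,1]² \ {(1,1)}`. For
`s ∈ F \ {0}`, `s - n₁ ∉ F` forces `q₁ ≤ 1`, `q₂ > 0` and `(q₁, q₂) ≠ (1, 1)`; conversely these
conditions together with `q₂ ≤ 1` give `s - n₁ ∉ F`. Exchanging `n₁` and `n₂` gives the rest.
-/

open Set Pointwise

theorem Prod.linearIndependent_pair_iff_det_ne_zero {K : Type*} [Field K] {v w : K × K} :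
    LinearIndependent K ![v, w] ↔ v.1 * w.2 - v.2 * w.1 ≠ 0 := by
  let e := (LinearEquiv.finTwoArrow K K).symm
  have hrows : e ∘ ![v, w] = Matrix.row !![v.1, v.2; w.1, w.2] := by
    ext i j; fin_cases i <;> fin_cases j <;> rfl
  rw [← e.toLinearMap.linearIndependent_iff_of_injOn e.injective.injOn, LinearEquiv.coe_coe,
    hrows, Matrix.linearIndependent_rows_iff_isUnit, Matrix.isUnit_iff_isUnit_det,
    Matrix.det_fin_two_of, isUnit_iff_ne_zero]

section Parallelogram

variable {𝕜 E : Type*} [Field 𝕜] [LinearOrder 𝕜] [IsStrictOrderedRing 𝕜] [AddCommGroup E]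
  [Module 𝕜 E]

theorem mem_segment_zero_iff {v x : E} : x ∈ segment 𝕜 0 v ↔ ∃ t ∈ Icc (0 : 𝕜) 1, t • v = x := by
  simp [segment_eq_image']

theorem convexHull_parallelogram (v w : E) :
    convexHull 𝕜 {0, v, w, v + w} = segment 𝕜 0 v + segment 𝕜 0 w := by
  rw [← convexHull_pair, ← convexHull_pair, ← convexHull_add]
  congr 1
  ext x
  simp only [mem_add, mem_insert_iff, mem_singleton_iff]
  aesop

variable {v w : E} {a b : 𝕜}

theorem smul_add_smul_mem_convexHull_parallelogram_iff (hvw : LinearIndependent 𝕜 ![v, w]) :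
    a • v + b • w ∈ convexHull 𝕜 {0, v, w, v + w} ↔ a ∈ Icc 0 1 ∧ b ∈ Icc 0 1 := by
  simp only [convexHull_parallelogram, mem_add, mem_segment_zero_iff]
  constructor
  · rintro ⟨_, ⟨s, hs, rfl⟩, _, ⟨t, ht, rfl⟩, hst⟩
    obtain ⟨rfl, rfl⟩ := hvw.eq_of_pair hst
    exact ⟨hs, ht⟩
  · rintro ⟨ha, hb⟩
    exact ⟨_, ⟨a, ha, rfl⟩, _, ⟨b, hb, rfl⟩, rfl⟩

theorem smul_add_smul_mem_segment_zero_left_iff (hvw : LinearIndependent 𝕜 ![v, w]) :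
    a • v + b • w ∈ segment 𝕜 0 v ↔ a ∈ Icc 0 1 ∧ b = 0 := by
  rw [mem_segment_zero_iff]
  constructor
  · rintro ⟨t, ht, hst⟩
    obtain ⟨rfl, rfl⟩ := hvw.eq_of_pair (s := a) (t := b) (s' := t) (t' := 0)
      (by rw [zero_smul, add_zero]; exact hst.symm)
    exact ⟨ht, rfl⟩
  · rintro ⟨ha, rfl⟩
    exact ⟨a, ha, by simp⟩

theorem smul_add_smul_mem_segment_zero_right_iff (hvw : LinearIndependent 𝕜 ![v, w]) :
    a • v + b • w ∈ segment 𝕜 0 w ↔ b ∈ Icc 0 1 ∧ a = 0 := by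
  rw [add_comm]
  exact smul_add_smul_mem_segment_zero_left_iff (LinearIndependent.pair_symm_iff.mp hvw)

end Parallelogram

section Coordinates

variable {a n₁ n₂ : ℤ × ℤ} {q₁ q₂ : ℚ}

@[simp] theorem toQ_add (a b : ℤ × ℤ) : toQ (a + b) = toQ a + toQ b := by
  simp [toQ]

@[simp] theorem toQ_sub (a b : ℤ × ℤ) : toQ (a - b) = toQ a - toQ b := by
  simp [toQ]

@[simp] theorem toQ_nsmul (k : ℕ) (a : ℤ × ℤ) : toQ (k • a) = (k : ℚ) • toQ a := by
  simp [toQ]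

theorem toQ_injective : Function.Injective toQ := by
  intro a b h
  simp only [toQ, Prod.ext_iff, Int.cast_inj] at h ⊢
  exact h

theorem toR_eq_of_toQ_eq (h : toQ a = q₁ • toQ n₁ + q₂ • toQ n₂) :
    toR a = (q₁ : ℝ) • toR n₁ + (q₂ : ℝ) • toR n₂ := by
  simp only [toQ, toR, Prod.ext_iff, Prod.fst_add, Prod.snd_add, Prod.smul_fst, Prod.smul_snd,
    smul_eq_mul] at h ⊢
  obtain ⟨h₁, h₂⟩ := h
  exact ⟨mod_cast congrArg (Rat.cast : ℚ → ℝ) h₁, mod_cast congrArg (Rat.cast : ℚ → ℝ) h₂⟩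

theorem linearIndependent_toR (hind : LinearIndependent ℚ ![toQ n₁, toQ n₂]) :
    LinearIndependent ℝ ![toR n₁, toR n₂] := by
  rw [Prod.linearIndependent_pair_iff_det_ne_zero] at hind ⊢
  simp only [toQ, toR] at hind ⊢
  exact_mod_cast hind

theorem isNat_of_toQ_eq (h₁ : isNat n₁) (h₂ : isNat n₂) (hq₁ : 0 ≤ q₁) (hq₂ : 0 ≤ q₂)
    (h : toQ a = q₁ • toQ n₁ + q₂ • toQ n₂) : isNat a := by
  obtain ⟨h₁₁, h₁₂⟩ := h₁
  obtain ⟨h₂₁, h₂₂⟩ := h₂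
  simp only [toQ, Prod.ext_iff, Prod.fst_add, Prod.snd_add, Prod.smul_fst, Prod.smul_snd,
    smul_eq_mul] at h
  constructor
  · have : (0 : ℚ) ≤ a.1 := by rw [h.1]; positivity
    exact_mod_cast this
  · have : (0 : ℚ) ≤ a.2 := by rw [h.2]; positivity
    exact_mod_cast this

theorem onRay_left_iff (hind : LinearIndependent ℚ ![toQ n₁, toQ n₂])
    (h : toQ a = q₁ • toQ n₁ + q₂ • toQ n₂) : onRay n₁ a ↔ 0 ≤ q₁ ∧ q₂ = 0 := by
  constructor
  · rintro ⟨q, hq, ha⟩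
    obtain ⟨rfl, rfl⟩ := hind.eq_of_pair (s := q) (t := 0) (s' := q₁) (t' := q₂)
      (by rw [zero_smul, add_zero, ← ha, h])
    exact ⟨hq, rfl⟩
  · rintro ⟨hq₁, rfl⟩
    exact ⟨q₁, hq₁, by rw [h, zero_smul, add_zero]⟩

theorem onRay_right_iff (hind : LinearIndependent ℚ ![toQ n₁, toQ n₂])
    (h : toQ a = q₁ • toQ n₁ + q₂ • toQ n₂) : onRay n₂ a ↔ 0 ≤ q₂ ∧ q₁ = 0 :=
  onRay_left_iff (LinearIndependent.pair_symm_iff.mp hind) (h.trans (add_comm _ _))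

theorem mem_HSet_iff (hind : LinearIndependent ℚ ![toQ n₁, toQ n₂])
    (h : toQ a = q₁ • toQ n₁ + q₂ • toQ n₂) (ha : a ≠ 0) :
    a ∈ HSet n₁ n₂ ↔ isNat a ∧ q₁ ∈ Ioc 0 1 ∧ q₂ ∈ Ioc 0 1 ∧ ¬(q₁ = 1 ∧ q₂ = 1) := by
  have hR := linearIndependent_toR hind
  have hsum : (q₁ : ℝ) • toR n₁ + (q₂ : ℝ) • toR n₂ = toR n₁ + toR n₂ ↔
      (q₁ : ℝ) = 1 ∧ (q₂ : ℝ) = 1 := by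
    refine ⟨fun he => hR.eq_of_pair (by rwa [one_smul, one_smul]), ?_⟩
    rintro ⟨h₁, h₂⟩
    rw [h₁, h₂, one_smul, one_smul]
  simp only [HSet, mem_union, mem_ofPred_eq, mem_singleton_iff, ha, or_false, not_or,
    toR_eq_of_toQ_eq h, smul_add_smul_mem_convexHull_parallelogram_iff hR,
    smul_add_smul_mem_segment_zero_left_iff hR, smul_add_smul_mem_segment_zero_right_iff hR, hsum,
    mem_Icc, mem_Ioc]
  norm_cast
  grind

end Coordinates

/-- The hypotheses on `F`: `F ⊆ ℕ²` lies in the cone `C` spanned by `n₁, n₂ ∈ F`,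
`int(C) = int(F)`, and `F ∩ τᵢ = ℕ nᵢ`. -/
structure IsSimplicialPair (F : AddSubmonoid (ℤ × ℤ)) (n₁ n₂ : ℤ × ℤ) : Prop where
  isNat_of_mem : ∀ s ∈ F, isNat s
  indep : LinearIndependent ℚ ![toQ n₁, toQ n₂]
  left_mem : n₁ ∈ F
  right_mem : n₂ ∈ F
  inCone_of_mem : ∀ s ∈ F, inCone n₁ n₂ s
  mem_of_interior : ∀ a, isNat a → inCone n₁ n₂ a → ¬ onRay n₁ a → ¬ onRay n₂ a → a ∈ F
  exists_nsmul_left : ∀ a ∈ F, onRay n₁ a → ∃ k : ℕ, a = k • n₁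
  exists_nsmul_right : ∀ a ∈ F, onRay n₂ a → ∃ k : ℕ, a = k • n₂

theorem inCone_comm {n₁ n₂ a : ℤ × ℤ} : inCone n₁ n₂ a ↔ inCone n₂ n₁ a := by
  constructor <;> rintro ⟨q₁, q₂, hq₁, hq₂, h⟩ <;> exact ⟨q₂, q₁, hq₂, hq₁, h.trans (add_comm _ _)⟩

namespace IsSimplicialPair

variable {F : AddSubmonoid (ℤ × ℤ)} {n₁ n₂ s : ℤ × ℤ} {q₁ q₂ : ℚ}

theorem symm (h : IsSimplicialPair F n₁ n₂) : IsSimplicialPair F n₂ n₁ where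
  isNat_of_mem := h.isNat_of_mem
  indep := LinearIndependent.pair_symm_iff.mp h.indep
  left_mem := h.right_mem
  right_mem := h.left_mem
  inCone_of_mem s hs := inCone_comm.mp (h.inCone_of_mem s hs)
  mem_of_interior a ha hc h₂ h₁ := h.mem_of_interior a ha (inCone_comm.mp hc) h₁ h₂
  exists_nsmul_left := h.exists_nsmul_right
  exists_nsmul_right := h.exists_nsmul_left

theorem coords_nonneg (h : IsSimplicialPair F n₁ n₂) (hs : s ∈ F)
    (hq : toQ s = q₁ • toQ n₁ + q₂ • toQ n₂) : 0 ≤ q₁ ∧ 0 ≤ q₂ := by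
  obtain ⟨r₁, r₂, hr₁, hr₂, hr⟩ := h.inCone_of_mem s hs
  obtain ⟨rfl, rfl⟩ := h.indep.eq_of_pair (hq.symm.trans hr)
  exact ⟨hr₁, hr₂⟩

theorem mem_of_coords_pos (h : IsSimplicialPair F n₁ n₂) (hq₁ : 0 < q₁) (hq₂ : 0 < q₂)
    (hq : toQ s = q₁ • toQ n₁ + q₂ • toQ n₂) : s ∈ F := by
  refine h.mem_of_interior s ?_ ⟨q₁, q₂, hq₁.le, hq₂.le, hq⟩ ?_ ?_
  · exact isNat_of_toQ_eq (h.isNat_of_mem _ h.left_mem) (h.isNat_of_mem _ h.right_mem)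
      hq₁.le hq₂.le hq
  · rw [onRay_left_iff h.indep hq]
    exact fun h' => hq₂.ne' h'.2
  · rw [onRay_right_iff h.indep hq]
    exact fun h' => hq₁.ne' h'.2

theorem exists_nsmul_of_toQ_eq (h : IsSimplicialPair F n₁ n₂) (hs : s ∈ F)
    (hq : toQ s = q₁ • toQ n₁) : ∃ k : ℕ, s = k • n₁ ∧ (k : ℚ) = q₁ := by
  have hq' : toQ s = q₁ • toQ n₁ + (0 : ℚ) • toQ n₂ := by rw [hq, zero_smul, add_zero]
  obtain ⟨k, rfl⟩ := h.exists_nsmul_left s hs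
    ((onRay_left_iff h.indep hq').mpr ⟨(h.coords_nonneg hs hq').1, rfl⟩)
  refine ⟨k, rfl, (h.indep.eq_of_pair (t := 0) (t' := 0) ?_).1⟩
  rw [zero_smul, add_zero, add_zero, ← toQ_nsmul, hq]

theorem coords_of_sub_left_notMem (h : IsSimplicialPair F n₁ n₂) (hs : s ∈ F) (hs₀ : s ≠ 0)
    (hsub : s - n₁ ∉ F) (hq : toQ s = q₁ • toQ n₁ + q₂ • toQ n₂) :
    q₁ ≤ 1 ∧ 0 < q₂ ∧ ¬(q₁ = 1 ∧ q₂ = 1) := by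
  obtain ⟨hq₁, hq₂⟩ := h.coords_nonneg hs hq
  have hsub_coords : toQ (s - n₁) = (q₁ - 1) • toQ n₁ + q₂ • toQ n₂ := by
    rw [toQ_sub, hq]; module
  have hq₂_pos : 0 < q₂ := by
    refine hq₂.lt_of_ne fun hq₂₀ => ?_
    obtain ⟨k, rfl, -⟩ := h.exists_nsmul_of_toQ_eq hs (by rw [hq, ← hq₂₀, zero_smul, add_zero])
    obtain _ | k := k
    · exact hs₀ (zero_smul ℕ n₁)
    · exact hsub (by rw [succ_nsmul, add_sub_cancel_right]; exact nsmul_mem h.left_mem k)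
  refine ⟨?_, hq₂_pos, ?_⟩
  · by_contra! hq₁_gt
    exact hsub (h.mem_of_coords_pos (sub_pos.mpr hq₁_gt) hq₂_pos hsub_coords)
  · rintro ⟨rfl, rfl⟩
    have : s = n₁ + n₂ := toQ_injective (by rw [hq, toQ_add, one_smul, one_smul])
    exact hsub (by rw [this, add_sub_cancel_left]; exact h.right_mem)

theorem sub_left_notMem (h : IsSimplicialPair F n₁ n₂) (hq₁ : q₁ ≤ 1) (hq₂ : q₂ ∈ Ioc 0 1)
    (hne : ¬(q₁ = 1 ∧ q₂ = 1)) (hq : toQ s = q₁ • toQ n₁ + q₂ • toQ n₂) : s - n₁ ∉ F := by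
  intro hmem
  have hsub_coords : toQ (s - n₁) = (q₁ - 1) • toQ n₁ + q₂ • toQ n₂ := by
    rw [toQ_sub, hq]; module
  have hq₁_eq : q₁ = 1 := le_antisymm hq₁ (sub_nonneg.mp (h.coords_nonneg hmem hsub_coords).1)
  obtain ⟨k, -, hk⟩ := h.symm.exists_nsmul_of_toQ_eq hmem
    (by rw [hsub_coords, hq₁_eq, sub_self, zero_smul, zero_add])
  have hk₁ : k = 1 := by
    obtain ⟨hk_pos, hk_le⟩ : (0 : ℚ) < k ∧ (k : ℚ) ≤ 1 := hk ▸ hq₂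
    exact le_antisymm (mod_cast hk_le) (mod_cast hk_pos)
  exact hne ⟨hq₁_eq, by rw [← hk, hk₁, Nat.cast_one]⟩

theorem neg_left_notMem (h : IsSimplicialPair F n₁ n₂) : -n₁ ∉ F := by
  intro hneg
  have hn₁ : n₁ = 0 := by
    obtain ⟨h₁, h₂⟩ := h.isNat_of_mem _ h.left_mem
    obtain ⟨h₁', h₂'⟩ := h.isNat_of_mem _ hneg
    simp only [Prod.fst_neg, Prod.snd_neg, Left.nonneg_neg_iff] at h₁' h₂'
    exact Prod.ext (le_antisymm h₁' h₁) (le_antisymm h₂' h₂)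
  exact h.indep.ne_zero 0 (by simp [hn₁, toQ])

end IsSimplicialPair

/-- Lemma "lema_apery": `Ap(n₁) ∩ Ap(n₂) = F ∩ H`. -/
theorem stmt6 (F : AddSubmonoid (ℤ × ℤ)) (n₁ n₂ : ℤ × ℤ)
    (hnat : ∀ s ∈ F, isNat s)
    (hind : LinearIndependent ℚ ![toQ n₁, toQ n₂])
    (hn₁ : n₁ ∈ F) (hn₂ : n₂ ∈ F)
    (hcone : ∀ s ∈ F, inCone n₁ n₂ s)
    (hint : ∀ a : ℤ × ℤ,
      (isNat a ∧ inCone n₁ n₂ a ∧ ¬ onRay n₁ a ∧ ¬ onRay n₂ a) ↔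
      (a ∈ F ∧ ¬ onRay n₁ a ∧ ¬ onRay n₂ a))
    (hτ₁ : ∀ a : ℤ × ℤ, (a ∈ F ∧ onRay n₁ a) ↔ ∃ k : ℕ, a = k • n₁)
    (hτ₂ : ∀ a : ℤ × ℤ, (a ∈ F ∧ onRay n₂ a) ↔ ∃ k : ℕ, a = k • n₂) :
    {s : ℤ × ℤ | s ∈ F ∧ s - n₁ ∉ F} ∩ {s : ℤ × ℤ | s ∈ F ∧ s - n₂ ∉ F} =
    {s : ℤ × ℤ | s ∈ F} ∩ HSet n₁ n₂ := by
  have h : IsSimplicialPair F n₁ n₂ :=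
    ⟨hnat, hind, hn₁, hn₂, hcone, fun a h₁ h₂ h₃ h₄ => ((hint a).mp ⟨h₁, h₂, h₃, h₄⟩).1,
      fun a ha hr => (hτ₁ a).mp ⟨ha, hr⟩, fun a ha hr => (hτ₂ a).mp ⟨ha, hr⟩⟩
  ext s
  simp only [mem_inter_iff, mem_ofPred_eq]
  rcases eq_or_ne s 0 with rfl | hs₀
  · simp only [zero_sub, HSet, mem_union, mem_singleton_iff, or_true, and_true]
    exact ⟨fun h' => h'.1.1, fun hF => ⟨⟨hF, h.neg_left_notMem⟩, hF, h.symm.neg_left_notMem⟩⟩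
  constructor
  · rintro ⟨⟨hs, h₁⟩, -, h₂⟩
    obtain ⟨q₁, q₂, -, -, hq⟩ := hcone s hs
    obtain ⟨hq₁, hq₂, hne⟩ := h.coords_of_sub_left_notMem hs hs₀ h₁ hq
    obtain ⟨hq₂', hq₁', -⟩ :=
      h.symm.coords_of_sub_left_notMem hs hs₀ h₂ (hq.trans (add_comm _ _))
    exact ⟨hs, (mem_HSet_iff hind hq hs₀).mpr ⟨hnat s hs, ⟨hq₁', hq₁⟩, ⟨hq₂, hq₂'⟩, hne⟩⟩
  · rintro ⟨hs, hH⟩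
    obtain ⟨q₁, q₂, -, -, hq⟩ := hcone s hs
    obtain ⟨-, hq₁, hq₂, hne⟩ := (mem_HSet_iff hind hq hs₀).mp hH
    exact ⟨⟨hs, h.sub_left_notMem hq₁.2 hq₂ hne hq⟩,
      ⟨hs, h.symm.sub_left_notMem hq₂.2 hq₁ (fun e => hne e.symm) (hq.trans (add_comm _ _))⟩⟩
end

section
/- Let T ⊆ ℝ²≥0 be the triangle with vertices (4,0), (10,0), (7,3) and 𝔗 = ⋃_{i∈ℕ} (i·T) ∩ ℕ², with n₁ = (7,3), n₂ = (4,0). Then 𝔗 satisfies the combinatorial Cohen-Macaulay condition: for every a ∈ C \ 𝔗, where C = {q₁(7,3) + q₂(4,0) : q₁, q₂ ∈ ℚ≥0} ∩ ℕ², at least one of a + n₁, a + n₂ is not in 𝔗. -/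
open scoped Pointwise

def tri3 : Set (ℝ × ℝ) :=
  convexHull ℝ {((4 : ℝ), (0 : ℝ)), ((10 : ℝ), (0 : ℝ)), ((7 : ℝ), (3 : ℝ))}

def triSem3 : Set (ℤ × ℤ) :=
  {a : ℤ × ℤ | a = 0 ∨ ∃ i : ℕ, toR a ∈ (i : ℝ) • tri3}

/-!
The dilate `k • T` is cut out by `y ≥ 0`, `x - y ≥ 4k` and `x + y ≤ 10k`. Translation by the
apex `n₁ = (7, 3)` raises `x - y` by `4` and `x + y` by `10`, so it maps `(k - 1) • T` onto the
part of `k • T` above the line `y = 3`. Hence `a + n₁ ∈ 𝔗` already forces `a ∈ 𝔗` for every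
`a ∈ ℕ²`.
-/

lemma mem_tri3_iff (p : ℝ × ℝ) :
    p ∈ tri3 ↔ 0 ≤ p.2 ∧ 4 + p.2 ≤ p.1 ∧ p.1 ≤ 10 - p.2 := by
  constructor
  · refine fun hp => convexHull_min (t := {q : ℝ × ℝ | 0 ≤ q.2 ∧ 4 + q.2 ≤ q.1 ∧ q.1 ≤ 10 - q.2})
      ?_ ?_ hp
    · rintro q (rfl | rfl | rfl) <;> norm_num
    · intro u hu v hv s t hs ht hst
      simp only [Set.mem_ofPred_eq, Prod.fst_add, Prod.snd_add, Prod.smul_fst, Prod.smul_snd,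
        smul_eq_mul] at hu hv ⊢
      refine ⟨add_nonneg (mul_nonneg hs hu.1) (mul_nonneg ht hv.1), ?_, ?_⟩ <;>
        nlinarith [mul_le_mul_of_nonneg_left hu.2.1 hs, mul_le_mul_of_nonneg_left hv.2.1 ht,
          mul_le_mul_of_nonneg_left hu.2.2 hs, mul_le_mul_of_nonneg_left hv.2.2 ht]
  · rintro ⟨h0, h1, h2⟩
    -- barycentric coordinates of `p` with respect to `(4,0)`, `(10,0)`, `(7,3)`
    refine mem_convexHull_of_exists_fintype ![(10 - p.1 - p.2) / 6, (p.1 - 4 - p.2) / 6, p.2 / 3]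
      ![((4 : ℝ), (0 : ℝ)), ((10 : ℝ), (0 : ℝ)), ((7 : ℝ), (3 : ℝ))] ?_ ?_ ?_ ?_
    · intro i; fin_cases i <;> simp <;> linarith
    · simp [Fin.sum_univ_three]; ring
    · intro i; fin_cases i <;> simp
    · ext <;> simp [Fin.sum_univ_three]
      ring

lemma mem_smul_tri3_iff {c : ℝ} (hc : 0 ≤ c) (p : ℝ × ℝ) :
    p ∈ c • tri3 ↔ 0 ≤ p.2 ∧ 4 * c + p.2 ≤ p.1 ∧ p.1 ≤ 10 * c - p.2 := by
  rcases hc.eq_or_lt with rfl | hc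
  · have hne : tri3.Nonempty := ⟨(7, 3), (mem_tri3_iff _).2 (by norm_num)⟩
    rw [Set.zero_smul_set hne, Set.mem_zero, Prod.ext_iff]
    constructor
    · rintro ⟨h1, h2⟩; simp [h1, h2]
    · rintro ⟨_, _, _⟩; constructor <;> simp <;> linarith
  · obtain ⟨q, rfl⟩ : ∃ q, p = c • q := ⟨c⁻¹ • p, by simp [smul_smul, hc.ne']⟩
    rw [Set.smul_mem_smul_set_iff₀ hc.ne', mem_tri3_iff]
    simp only [Prod.smul_fst, Prod.smul_snd, smul_eq_mul]
    rw [show 4 * c + c * q.2 = c * (4 + q.2) by ring,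
      show 10 * c - c * q.2 = c * (10 - q.2) by ring, mul_le_mul_iff_of_pos_left hc,
      mul_le_mul_iff_of_pos_left hc, mul_nonneg_iff_of_pos_left hc]

lemma mem_triSem3_iff (a : ℤ × ℤ) :
    a ∈ triSem3 ↔ ∃ k : ℕ, 0 ≤ a.2 ∧ 4 * k + a.2 ≤ a.1 ∧ a.1 ≤ 10 * k - a.2 := by
  have hdilate (k : ℕ) : toR a ∈ (k : ℝ) • tri3 ↔
      0 ≤ a.2 ∧ 4 * (k : ℤ) + a.2 ≤ a.1 ∧ a.1 ≤ 10 * (k : ℤ) - a.2 := by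
    rw [mem_smul_tri3_iff k.cast_nonneg]
    simp only [toR]
    norm_cast
  simp only [triSem3, Set.mem_ofPred_eq, hdilate]
  constructor
  · rintro (rfl | h)
    · exact ⟨0, by simp⟩
    · exact h
  · exact Or.inr

lemma mem_triSem3_of_add_apex {a : ℤ × ℤ} (ha : 0 ≤ a.2)
    (h : a + ((7 : ℤ), (3 : ℤ)) ∈ triSem3) : a ∈ triSem3 := by
  obtain ⟨k, -, hlow, hhigh⟩ := (mem_triSem3_iff _).1 h
  simp only [Prod.fst_add, Prod.snd_add] at hlow hhigh
  -- `hlow` and `hhigh` give `6 * k ≥ 6 + 2 * a.2`, so `k - 1` does not truncate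
  refine (mem_triSem3_iff a).2 ⟨k - 1, ha, ?_, ?_⟩ <;> omega

/-- Instance of Corollary "triangulos_C-M": the semigroup of the triangle
`{(4,0),(10,0),(7,3)}` satisfies the combinatorial Cohen-Macaulay condition. -/
theorem stmt15 :
    ∀ a : ℤ × ℤ, isNat a → inCone ((7 : ℤ), (3 : ℤ)) ((4 : ℤ), (0 : ℤ)) a →
      a ∉ triSem3 →
      (a + ((7 : ℤ), (3 : ℤ)) ∉ triSem3 ∨ a + ((4 : ℤ), (0 : ℤ)) ∉ triSem3) := by
  intro a ha _ hna
  exact Or.inl fun h => hna (mem_triSem3_of_add_apex ha.2 h)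
end
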